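/- arXiv:1410.4736 — 5 statements merged into one kernel-verified Lean document; each statement's English description precedes it below -/
import Mathlib

section
/- Let d, D, M > 0. Define c_max = 2√(d M) if D ≤ 2d, and c_max = √(D² M /(D - d)) if D ≥ 2d. Then for every c > c_max there exists r > 0 with -D r² + c r ≥ 0 and -d r² + c r ≥ M. Conversely, if c < c_max no such r exists. -/
/-!
Write `q r = -d r² + c r`. The first constraint says exactly `0 < r ≤ c / D`, so a feasible `r`
exists iff the maximum of `q` over `(0, c / D]` is at least `M`. Since `q` increases up to its
vertex `c / (2d)`, this maximum is `q (c / (2d)) = c² / (4d)` when `D ≤ 2d` and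
`q (c / D) = c² (D - d) / D²` when `2d < D`; solving for `c` gives `c_max` in both cases, and in
fact feasibility is equivalent to `c_max ≤ c`.
-/

namespace TravellingWave

open Real

noncomputable def cmax (d D M : ℝ) : ℝ :=
  if D ≤ 2 * d then 2 * √(d * M) else √(D ^ 2 * M / (D - d))

variable {d D M c : ℝ}

lemma neg_mul_sq_add_mul_le_div (hd : 0 < d) (r : ℝ) : -d * r ^ 2 + c * r ≤ c ^ 2 / (4 * d) := by
  rw [le_div_iff₀ (by positivity)]
  nlinarith [sq_nonneg (c - 2 * d * r)]

lemma neg_mul_sq_add_mul_le_of_le {r s : ℝ} (hrs : r ≤ s) (hsum : d * (r + s) ≤ c) :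
    -d * r ^ 2 + c * r ≤ -d * s ^ 2 + c * s := by
  nlinarith [mul_nonneg (sub_nonneg.2 hrs) (sub_nonneg.2 hsum)]

lemma two_mul_sqrt_le_iff {x : ℝ} : 2 * √x ≤ c ↔ 0 ≤ c ∧ 4 * x ≤ c ^ 2 := by
  rw [← le_div_iff₀' two_pos, sqrt_le_iff, div_pow]
  constructor <;> rintro ⟨hc, hx⟩ <;> constructor <;> linarith

lemma pos_of_neg_mul_sq_add_mul_ge (hd : 0 ≤ d) (hM : 0 < M) {r : ℝ} (hr : 0 < r)
    (h : -d * r ^ 2 + c * r ≥ M) : 0 < c := by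
  nlinarith [mul_nonneg hd (sq_nonneg r)]

lemma exists_feasible_iff_of_le (hd : 0 < d) (hM : 0 < M) (hDd : D ≤ 2 * d) :
    (∃ r : ℝ, 0 < r ∧ -D * r ^ 2 + c * r ≥ 0 ∧ -d * r ^ 2 + c * r ≥ M) ↔
      2 * √(d * M) ≤ c := by
  rw [two_mul_sqrt_le_iff]
  constructor
  · rintro ⟨r, hr, -, hq⟩
    have hM_le : M ≤ c ^ 2 / (4 * d) := hq.le.trans (neg_mul_sq_add_mul_le_div hd r)
    rw [le_div_iff₀ (by positivity)] at hM_le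
    exact ⟨(pos_of_neg_mul_sq_add_mul_ge hd.le hM hr hq).le, by linarith⟩
  · rintro ⟨hc, hc_sq⟩
    have hc_pos : 0 < c := by nlinarith [mul_pos hd hM]
    refine ⟨c / (2 * d), by positivity, ?_, ?_⟩
    · have : -D * (c / (2 * d)) ^ 2 + c * (c / (2 * d)) = c ^ 2 * (2 * d - D) / (4 * d ^ 2) := by
        field_simp; ring
      rw [this]
      have : 0 ≤ 2 * d - D := by linarith
      positivity
    · have : -d * (c / (2 * d)) ^ 2 + c * (c / (2 * d)) = c ^ 2 / (4 * d) := by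
        field_simp; ring
      rw [this, ge_iff_le, le_div_iff₀ (by positivity)]
      linarith

lemma exists_feasible_iff_of_lt (hd : 0 < d) (hM : 0 < M) (hDd : 2 * d < D) :
    (∃ r : ℝ, 0 < r ∧ -D * r ^ 2 + c * r ≥ 0 ∧ -d * r ^ 2 + c * r ≥ M) ↔
      √(D ^ 2 * M / (D - d)) ≤ c := by
  have hD : 0 < D := by linarith
  have hD_sub : 0 < D - d := by linarith
  have q_at_edge : -d * (c / D) ^ 2 + c * (c / D) = c ^ 2 * (D - d) / D ^ 2 := by
    field_simp; ring
  rw [sqrt_le_iff, div_le_iff₀ hD_sub]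
  constructor
  · rintro ⟨r, hr, hfeas, hq⟩
    have hc := pos_of_neg_mul_sq_add_mul_ge hd.le hM hr hq
    have hr_le : r ≤ c / D := by
      rw [le_div_iff₀ hD]
      nlinarith
    have hsum : d * (r + c / D) ≤ c := by
      have : 2 * d * (c / D) ≤ c := by
        rw [mul_div_assoc', div_le_iff₀ hD]
        nlinarith
      nlinarith
    have hM_le := hq.le.trans (neg_mul_sq_add_mul_le_of_le hr_le hsum)
    rw [q_at_edge, le_div_iff₀ (by positivity)] at hM_le
    exact ⟨hc.le, by linarith⟩
  · rintro ⟨hc, hc_sq⟩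
    have hc_pos : 0 < c := hc.lt_of_ne (by rintro rfl; nlinarith [mul_pos (pow_pos hD 2) hM])
    refine ⟨c / D, by positivity, ?_, ?_⟩
    · have : -D * (c / D) ^ 2 + c * (c / D) = 0 := by
        field_simp; ring
      rw [this]
    · rw [q_at_edge, ge_iff_le, le_div_iff₀ (by positivity)]
      linarith

theorem exists_feasible_iff_cmax_le (hd : 0 < d) (hM : 0 < M) :
    (∃ r : ℝ, 0 < r ∧ -D * r ^ 2 + c * r ≥ 0 ∧ -d * r ^ 2 + c * r ≥ M) ↔ cmax d D M ≤ c := by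
  unfold cmax
  split_ifs with hDd
  · exact exists_feasible_iff_of_le hd hM hDd
  · exact exists_feasible_iff_of_lt hd hM (not_le.1 hDd)

end TravellingWave

theorem cmax_characterization_general (d D M : ℝ) (hd : 0 < d) (hM : 0 < M) :
    (∀ c : ℝ,
        c > (if D ≤ 2 * d then 2 * Real.sqrt (d * M) else Real.sqrt (D ^ 2 * M / (D - d))) →
        ∃ r : ℝ, 0 < r ∧ -D * r ^ 2 + c * r ≥ 0 ∧ -d * r ^ 2 + c * r ≥ M) ∧
    (∀ c : ℝ,
        c < (if D ≤ 2 * d then 2 * Real.sqrt (d * M) else Real.sqrt (D ^ 2 * M / (D - d))) →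
        ¬ ∃ r : ℝ, 0 < r ∧ -D * r ^ 2 + c * r ≥ 0 ∧ -d * r ^ 2 + c * r ≥ M) :=
  ⟨fun _ hc => (TravellingWave.exists_feasible_iff_cmax_le hd hM).2 hc.le,
    fun _ hc h => ((TravellingWave.exists_feasible_iff_cmax_le hd hM).1 h).not_gt hc⟩

theorem cmax_characterization (d D M : ℝ) (hd : 0 < d) (hD : 0 < D) (hM : 0 < M) :
    (∀ c : ℝ,
        c > (if D ≤ 2 * d then 2 * Real.sqrt (d * M) else Real.sqrt (D ^ 2 * M / (D - d))) →
        ∃ r : ℝ, 0 < r ∧ -D * r ^ 2 + c * r ≥ 0 ∧ -d * r ^ 2 + c * r ≥ M) ∧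
    (∀ c : ℝ,
        c < (if D ≤ 2 * d then 2 * Real.sqrt (d * M) else Real.sqrt (D ^ 2 * M / (D - d))) →
        ¬ ∃ r : ℝ, 0 < r ∧ -D * r ^ 2 + c * r ≥ 0 ∧ -d * r ^ 2 + c * r ≥ M) :=
  cmax_characterization_general d D M hd hM
end

section
/- Let d, D, c, L, s, μ > 0 and f'(1) < 0. With β(γ) = √(-f'(1)/(2d) - γ(γ + c/d)) defined for 0 ≤ γ ≤ γ_lim = (√(c² - 2df'(1)) - c)/(2d), the equation s(Dγ² + cγ) = d β(γ) tanh(β(γ) L) has a solution γ with 0 < γ < γ_lim. -/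
/-!
`β(γ)² = -f1/(2d) - γ(γ + c/d)` is a downward parabola in `γ` with positive root `γlim`.
The left side `s(Dγ² + cγ)` vanishes at `γ = 0` and is positive at `γlim`, while the right side
`d β tanh(β L)` is positive at `γ = 0` (there `β² = -f1/(2d) > 0`) and vanishes at `γlim`.
Both sides are continuous on `[0, γlim]`, so the intermediate value theorem gives a crossing.
-/

open Set

namespace Real

@[fun_prop]
theorem continuous_tanh : Continuous tanh := by
  simp only [funext tanh_eq_sinh_div_cosh]
  exact continuous_sinh.div continuous_cosh fun x => (cosh_pos x).ne'

theorem tanh_pos {x : ℝ} (hx : 0 < x) : 0 < tanh x := by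
  rw [tanh_eq_sinh_div_cosh]
  exact div_pos (sinh_pos_iff.mpr hx) (cosh_pos x)

end Real

theorem exists_mem_Ioo_eq_of_lt_of_gt {φ ψ : ℝ → ℝ} {a b : ℝ} (hab : a ≤ b)
    (hφ : ContinuousOn φ (Icc a b)) (hψ : ContinuousOn ψ (Icc a b))
    (ha : φ a < ψ a) (hb : ψ b < φ b) : ∃ x ∈ Ioo a b, φ x = ψ x := by
  obtain ⟨x, hx, hx0⟩ := intermediate_value_Ioo hab (hφ.sub hψ)
    (show (0 : ℝ) ∈ Ioo (φ a - ψ a) (φ b - ψ b) from ⟨by linarith, by linarith⟩)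
  exact ⟨x, hx, sub_eq_zero.mp hx0⟩

section Parabola

variable {d c f1 : ℝ}

theorem sqrt_discriminant_sub_pos (hd : 0 < d) (hc : 0 ≤ c) (hf1 : f1 < 0) :
    0 < √(c ^ 2 - 2 * d * f1) - c := by
  have : c < √(c ^ 2 - 2 * d * f1) := (Real.lt_sqrt hc).mpr (by nlinarith)
  linarith

theorem parabola_eq_zero_at_root (hd : d ≠ 0) (hdisc : 0 ≤ c ^ 2 - 2 * d * f1) :
    -f1 / (2 * d) - (√(c ^ 2 - 2 * d * f1) - c) / (2 * d) *
      ((√(c ^ 2 - 2 * d * f1) - c) / (2 * d) + c / d) = 0 := by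
  have hr := Real.sq_sqrt hdisc
  generalize √(c ^ 2 - 2 * d * f1) = r at hr ⊢
  field_simp
  linear_combination -hr

end Parabola

theorem wentzell_decay_rate_exists_general (d D c L s f1 : ℝ) (hd : 0 < d) (hD : 0 < D)
    (hc : 0 < c) (hL : 0 < L) (hs : 0 < s) (hf1 : f1 < 0) :
    let γlim := (Real.sqrt (c ^ 2 - 2 * d * f1) - c) / (2 * d)
    let β := fun γ : ℝ => Real.sqrt (-f1 / (2 * d) - γ * (γ + c / d))
    ∃ γ : ℝ, 0 < γ ∧ γ < γlim ∧
      s * (D * γ ^ 2 + c * γ) = d * β γ * Real.tanh (β γ * L) := by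
  intro γlim β
  have hγlim : 0 < γlim := div_pos (sqrt_discriminant_sub_pos hd hc.le hf1) (by positivity)
  have hβ0 : 0 < β 0 :=
    Real.sqrt_pos.mpr (by simpa using div_pos (neg_pos.mpr hf1) (by positivity))
  have hβlim : β γlim = 0 := by
    simp only [β, γlim]
    rw [parabola_eq_zero_at_root hd.ne' (by nlinarith), Real.sqrt_zero]
  obtain ⟨γ, ⟨hγ0, hγlt⟩, hγ⟩ := exists_mem_Ioo_eq_of_lt_of_gt hγlim.le
    (φ := fun γ => s * (D * γ ^ 2 + c * γ)) (ψ := fun γ => d * β γ * Real.tanh (β γ * L))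
    (by fun_prop) (by fun_prop)
    (by simpa using mul_pos (mul_pos hd hβ0) (Real.tanh_pos (mul_pos hβ0 hL)))
    (by simpa [hβlim] using (by positivity : 0 < s * (D * γlim ^ 2 + c * γlim)))
  exact ⟨γ, hγ0, hγlt, hγ⟩

theorem wentzell_decay_rate_exists (d D c L s μ f1 : ℝ) (hd : 0 < d) (hD : 0 < D)
    (hc : 0 < c) (hL : 0 < L) (hs : 0 < s) (hμ : 0 < μ) (hf1 : f1 < 0) :
    let γlim := (Real.sqrt (c ^ 2 - 2 * d * f1) - c) / (2 * d)
    let β := fun γ : ℝ => Real.sqrt (-f1 / (2 * d) - γ * (γ + c / d))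
    ∃ γ : ℝ, 0 < γ ∧ γ < γlim ∧
      s * (D * γ ^ 2 + c * γ) = d * β γ * Real.tanh (β γ * L) :=
  wentzell_decay_rate_exists_general d D c L s f1 hd hD hc hL hs hf1
end

section
/- Let d, D, c, L, μ > 0 and f'(1) < 0, and β(γ) = √(-f'(1)/(2d) - γ(γ + c/d)) for 0 ≤ γ ≤ γ_lim = (√(c² - 2df'(1)) - c)/(2d). Then the equation D γ² + c γ = μ d β(γ) / (1 + tanh(β(γ) L)) has a solution γ with 0 < γ < γ_lim. -/
/-!
Set `F γ = D γ² + c γ` and `G γ = μ d β(γ) / (1 + tanh (β(γ) L))`; both are continuous, the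
denominator of `G` being positive because `tanh > -1`. At `γ = 0` we have `F = 0 < G`, since
`β(0) = √(-f'(1)/(2d)) > 0`, while `γ_lim` is the positive root of `γ (γ + c/d) = -f'(1)/(2d)`,
so `β(γ_lim) = 0` and `G = 0 < F` there. The intermediate value theorem gives a crossing in
`(0, γ_lim)`.
-/

open Real Set

@[fun_prop]
theorem Real.continuous_tanh_s7 : Continuous tanh := by
  simp_rw [funext tanh_eq_sinh_div_cosh]
  exact continuous_sinh.div continuous_cosh fun x => (cosh_pos x).ne'

theorem Real.one_add_tanh_pos (x : ℝ) : 0 < 1 + tanh x := by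
  linarith [neg_one_lt_tanh x]

theorem exists_mem_Ioo_eq_of_continuousOn {f g : ℝ → ℝ} {a b : ℝ} (hab : a ≤ b)
    (hf : ContinuousOn f (Icc a b)) (hg : ContinuousOn g (Icc a b))
    (ha : f a < g a) (hb : g b < f b) : ∃ x ∈ Ioo a b, f x = g x := by
  have h0 : (0 : ℝ) ∈ Ioo ((f - g) a) ((f - g) b) := ⟨sub_neg.mpr ha, sub_pos.mpr hb⟩
  obtain ⟨x, hx, hfg⟩ := intermediate_value_Ioo hab (hf.sub hg) h0
  exact ⟨x, hx, sub_eq_zero.mp hfg⟩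

theorem lt_sqrt_sq_sub_mul {c d a : ℝ} (hd : 0 < d) (ha : a < 0) : c < √(c ^ 2 - 2 * d * a) :=
  calc c ≤ |c| := le_abs_self c
    _ = √(c ^ 2) := (sqrt_sq_eq_abs c).symm
    _ < √(c ^ 2 - 2 * d * a) := sqrt_lt_sqrt (sq_nonneg c) (by nlinarith)

theorem sqrt_sub_div_mul_add_div {c d a : ℝ} (hd : d ≠ 0) (hΔ : 0 ≤ c ^ 2 - 2 * d * a) :
    (√(c ^ 2 - 2 * d * a) - c) / (2 * d) * ((√(c ^ 2 - 2 * d * a) - c) / (2 * d) + c / d) =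
      -a / (2 * d) := by
  field_simp
  linear_combination sq_sqrt hΔ

theorem system_decay_rate_exists_general (d D c L μ f1 : ℝ) (hd : 0 < d) (hD : 0 < D)
    (hc : 0 < c) (hμ : 0 < μ) (hf1 : f1 < 0) :
    let γlim := (Real.sqrt (c ^ 2 - 2 * d * f1) - c) / (2 * d)
    let β := fun γ : ℝ => Real.sqrt (-f1 / (2 * d) - γ * (γ + c / d))
    ∃ γ : ℝ, 0 < γ ∧ γ < γlim ∧
      D * γ ^ 2 + c * γ = μ * d * β γ / (1 + Real.tanh (β γ * L)) := by
  intro γlim β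
  have hΔ : 0 ≤ c ^ 2 - 2 * d * f1 := by nlinarith
  have hγlim : 0 < γlim := div_pos (sub_pos.mpr (lt_sqrt_sq_sub_mul hd hf1)) (by positivity)
  have hβlim : β γlim = 0 := by simp [β, γlim, sqrt_sub_div_mul_add_div hd.ne' hΔ]
  have hβ0 : 0 < β 0 := sqrt_pos.mpr (by simpa using div_pos (neg_pos.mpr hf1) (by positivity))
  obtain ⟨γ, ⟨hγ0, hγγlim⟩, hγ⟩ := exists_mem_Ioo_eq_of_continuousOn hγlim.le
    (f := fun γ => D * γ ^ 2 + c * γ) (g := fun γ => μ * d * β γ / (1 + tanh (β γ * L)))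
    (by fun_prop)
    ((Continuous.div (by fun_prop) (by fun_prop) fun γ => (one_add_tanh_pos _).ne').continuousOn)
    (by simpa using div_pos (by positivity) (one_add_tanh_pos (β 0 * L)))
    (by simp only [hβlim, mul_zero, zero_div]; positivity)
  exact ⟨γ, hγ0, hγγlim, hγ⟩

theorem system_decay_rate_exists (d D c L μ f1 : ℝ) (hd : 0 < d) (hD : 0 < D)
    (hc : 0 < c) (hL : 0 < L) (hμ : 0 < μ) (hf1 : f1 < 0) :
    let γlim := (Real.sqrt (c ^ 2 - 2 * d * f1) - c) / (2 * d)
    let β := fun γ : ℝ => Real.sqrt (-f1 / (2 * d) - γ * (γ + c / d))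
    ∃ γ : ℝ, 0 < γ ∧ γ < γlim ∧
      D * γ ^ 2 + c * γ = μ * d * β γ / (1 + Real.tanh (β γ * L)) :=
  system_decay_rate_exists_general d D c L μ f1 hd hD hc hμ hf1
end

section
/- For y ∈ [-L, 0), the function ξ ↦ cosh(√(ξ²+1)(y+L)) / [d√(ξ²+1) sinh(√(ξ²+1) L) + ((D/μ)ξ² + (c₀/μ)iξ) cosh(√(ξ²+1) L)] is a Schwartz function of ξ ∈ ℝ (smooth with all derivatives rapidly decreasing). -/
/-!
Write `⟨ξ⟩ = √(ξ² + 1)` and say that `f` has growth `a` if each derivative of `f` is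
`O(exp (b ⟨ξ⟩))` on `ℝ` for every `b > a`. This class is closed under sums, derivatives and
products (growths add); functions of temperate growth have growth `0`, and `exp (c ⟨ξ⟩)` has
growth `c` because its derivatives are tempered multiples of itself. The denominator `Q` has
growth `L`, and its real part dominates `d sinh (L ⟨ξ⟩) ≳ exp (L ⟨ξ⟩)`; since
`(1 / Q)⁽ⁿ⁾ = Pₙ / Qⁿ⁺¹` with `Pₙ` of growth `n L`, the reciprocal has growth `-L`. The kernel
therefore has growth `(y + L) - L = y < 0`, and the factor `exp (y ⟨ξ⟩ / 2)` beats every polynomial.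
-/

open Real Asymptotics Filter Function Nat
open scoped ContDiff SchwartzMap

namespace Wentzell

noncomputable def bracket (ξ : ℝ) : ℝ := √(ξ ^ 2 + 1)

lemma one_le_bracket (ξ : ℝ) : 1 ≤ bracket ξ :=
  Real.one_le_sqrt.2 (by nlinarith [sq_nonneg ξ])

lemma bracket_pos (ξ : ℝ) : 0 < bracket ξ := one_pos.trans_le (one_le_bracket ξ)

lemma hasTemperateGrowth_bracket : bracket.HasTemperateGrowth := by
  have h : bracket = fun ξ : ℝ => (1 + ‖ξ‖ ^ 2) ^ (1 / 2 : ℝ) := by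
    ext ξ
    rw [bracket, Real.sqrt_eq_rpow, Real.norm_eq_abs, sq_abs, add_comm]
  exact h ▸ hasTemperateGrowth_one_add_norm_sq_rpow ℝ (1 / 2)

lemma pow_le_factorial_div_mul_exp {ε t : ℝ} (hε : 0 < ε) (ht : 0 ≤ t) (k : ℕ) :
    t ^ k ≤ k ! / ε ^ k * exp (ε * t) := by
  have h := Real.pow_div_factorial_le_exp _ (mul_nonneg hε.le ht) k
  rw [div_le_iff₀ (by positivity), mul_pow] at h
  rw [div_mul_eq_mul_div, le_div_iff₀ (by positivity)]
  linarith

lemma isBigO_one_add_norm_pow_exp_bracket (k : ℕ) {ε : ℝ} (hε : 0 < ε) :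
    (fun ξ : ℝ => (1 + ‖ξ‖) ^ k) =O[⊤] fun ξ => exp (ε * bracket ξ) := by
  refine isBigO_top.2 ⟨√2 ^ k * (k ! / ε ^ k), fun ξ => ?_⟩
  have h₁ : 1 + ‖ξ‖ ≤ √2 * bracket ξ := by
    simpa [bracket, add_comm, sq_abs] using one_add_norm_le_sqrt_two_mul_sqrt ξ
  rw [norm_of_nonneg (by positivity), norm_of_nonneg (exp_pos _).le, mul_assoc]
  calc (1 + ‖ξ‖) ^ k ≤ (√2 * bracket ξ) ^ k := by gcongr
    _ = √2 ^ k * bracket ξ ^ k := mul_pow _ _ _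
    _ ≤ _ := by gcongr; exact pow_le_factorial_div_mul_exp hε (bracket_pos ξ).le k

/-- The slack `b > a` absorbs every polynomial factor. -/
def ExpGrowth (a : ℝ) (f : ℝ → ℂ) : Prop :=
  ContDiff ℝ ∞ f ∧ ∀ n : ℕ, ∀ b, a < b → iteratedDeriv n f =O[⊤] fun ξ => exp (b * bracket ξ)

namespace ExpGrowth

variable {a a' : ℝ} {f g : ℝ → ℂ}

lemma mono (hf : ExpGrowth a f) (h : a ≤ a') : ExpGrowth a' f :=
  ⟨hf.1, fun n b hb => hf.2 n b (h.trans_lt hb)⟩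

lemma deriv (hf : ExpGrowth a f) : ExpGrowth a (deriv f) :=
  ⟨(contDiff_infty_iff_deriv.1 hf.1).2, fun n b hb => by
    simpa only [← iteratedDeriv_succ'] using hf.2 (n + 1) b hb⟩

lemma add (hf : ExpGrowth a f) (hg : ExpGrowth a g) : ExpGrowth a (f + g) := by
  refine ⟨hf.1.add hg.1, fun n b hb => ?_⟩
  have h : iteratedDeriv n (f + g) = iteratedDeriv n f + iteratedDeriv n g := by
    ext ξ
    exact iteratedDeriv_add (hf.1.of_le (by exact_mod_cast le_top)).contDiffAt
      (hg.1.of_le (by exact_mod_cast le_top)).contDiffAt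
  rw [h]
  exact (hf.2 n b hb).add (hg.2 n b hb)

lemma mul (hf : ExpGrowth a f) (hg : ExpGrowth a' g) : ExpGrowth (a + a') (f * g) := by
  refine ⟨hf.1.mul hg.1, fun n b hb => ?_⟩
  obtain ⟨δ, hδ, rfl⟩ : ∃ δ > 0, b = a + δ + (a' + δ) := ⟨(b - (a + a')) / 2, by linarith, by ring⟩
  have hterm : ∀ i j, (fun ξ => ‖iteratedDeriv i f ξ‖ * ‖iteratedDeriv j g ξ‖)
      =O[⊤] fun ξ => exp ((a + δ + (a' + δ)) * bracket ξ) := fun i j =>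
    ((hf.2 i (a + δ) (by linarith)).norm_left.mul (hg.2 j (a' + δ) (by linarith)).norm_left
      ).congr_right fun ξ => by rw [← exp_add, ← add_mul]
  refine IsBigO.trans (isBigO_of_le _ fun ξ => ?_)
    (IsBigO.fun_sum fun i (_ : i ∈ Finset.range (n + 1)) =>
      (hterm i (n - i)).const_mul_left (n.choose i : ℝ))
  rw [norm_of_nonneg (by positivity)]
  simp_rw [← norm_iteratedFDeriv_eq_norm_iteratedDeriv, ← mul_assoc]
  exact norm_iteratedFDeriv_mul_le hf.1 hg.1 ξ (by exact_mod_cast le_top)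

lemma _root_.Function.HasTemperateGrowth.expGrowth (hf : f.HasTemperateGrowth) :
    ExpGrowth 0 f := by
  refine ⟨hf.1, fun n b hb => ?_⟩
  obtain ⟨k, hk⟩ := hf.isBigO n
  refine IsBigO.trans ?_ (hk.trans (isBigO_one_add_norm_pow_exp_bracket k hb))
  refine isBigO_of_le _ fun ξ => ?_
  rw [norm_iteratedFDeriv_eq_norm_iteratedDeriv]

lemma const_mul (c : ℂ) (hf : ExpGrowth a f) : ExpGrowth a fun ξ => c * f ξ := by
  have h := (HasTemperateGrowth.const c).expGrowth.mul hf
  rwa [zero_add] at h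

/-- If `F' = h F` then `F⁽ⁿ⁾ = gₙ F` with `gₙ₊₁ = gₙ' + gₙ h`, so a bound on `F` alone suffices. -/
lemma of_deriv_eq_mul {F h : ℝ → ℂ} (hF : ContDiff ℝ ∞ F) (hderiv : _root_.deriv F = h * F)
    (hh : ExpGrowth 0 h) (hbound : ∀ b, a < b → F =O[⊤] fun ξ => exp (b * bracket ξ)) :
    ExpGrowth a F := by
  have hstruct : ∀ n, ∃ g, ExpGrowth 0 g ∧ iteratedDeriv n F = g * F := by
    intro n
    induction n with
    | zero => exact ⟨1, (HasTemperateGrowth.const 1).expGrowth, by simp⟩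
    | succ n ih =>
      obtain ⟨g, hg, hgF⟩ := ih
      refine ⟨_root_.deriv g + g * h, hg.deriv.add (by simpa using hg.mul hh), ?_⟩
      have hFd : Differentiable ℝ F := hF.differentiable (by simp)
      have hgd : Differentiable ℝ g := hg.1.differentiable (by simp)
      ext ξ
      rw [iteratedDeriv_succ, hgF, deriv_mul (hgd ξ) (hFd ξ), hderiv]
      simp only [Pi.add_apply, Pi.mul_apply]
      ring
  refine ⟨hF, fun n b hb => ?_⟩
  obtain ⟨g, hg, hgF⟩ := hstruct n
  obtain ⟨δ, hδ, hbδ⟩ : ∃ δ, 0 < δ ∧ a < b - δ := ⟨(b - a) / 2, by linarith, by linarith⟩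
  rw [hgF]
  exact ((hg.2 0 δ hδ).mul (hbound (b - δ) hbδ)).congr (fun ξ => rfl)
    fun ξ => by rw [← exp_add, ← add_mul, add_sub_cancel]

/-- `Pₙ₊₁ = Pₙ' Q - (n + 1) Pₙ Q'`. -/
lemma iteratedDeriv_inv_eq {Q : ℝ → ℂ} (hQ : ExpGrowth a Q) (hne : ∀ ξ, Q ξ ≠ 0) (n : ℕ) :
    ∃ P, ExpGrowth (n * a) P ∧
      iteratedDeriv n (fun ξ => (Q ξ)⁻¹) = fun ξ => P ξ / Q ξ ^ (n + 1) := by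
  induction n with
  | zero => exact ⟨fun _ => 1, by simpa using (HasTemperateGrowth.const (1 : ℂ)).expGrowth, by simp⟩
  | succ n ih =>
    obtain ⟨P, hP, hPQ⟩ := ih
    refine ⟨_root_.deriv P * Q + fun ξ => -(n + 1 : ℂ) * (P ξ * _root_.deriv Q ξ), ?_, ?_⟩
    · have h := hP.deriv.mul hQ |>.add ((hP.mul hQ.deriv).const_mul (-(n + 1 : ℂ)))
      push_cast at h ⊢
      rwa [_root_.add_one_mul]
    · have hPd : Differentiable ℝ P := hP.1.differentiable (by simp)
      have hQd : Differentiable ℝ Q := hQ.1.differentiable (by simp)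
      ext ξ
      rw [iteratedDeriv_succ, hPQ, ((hPd ξ).hasDerivAt.fun_div
        ((hQd ξ).hasDerivAt.fun_pow (n + 1)) (pow_ne_zero _ (hne ξ))).deriv]
      have := hne ξ
      simp only [Pi.add_apply, Pi.mul_apply, Nat.add_sub_cancel]
      field_simp
      push_cast
      ring

lemma inv {Q : ℝ → ℂ} (hQ : ExpGrowth a Q) (hlow : (fun ξ => exp (a * bracket ξ)) =O[⊤] Q) :
    ExpGrowth (-a) fun ξ => (Q ξ)⁻¹ := by
  have hne : ∀ ξ, Q ξ ≠ 0 := fun ξ hQξ =>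
    (exp_pos _).ne' (eventually_top.1 hlow.eq_zero_imp ξ hQξ)
  refine ⟨hQ.1.inv hne, fun n b hb => ?_⟩
  obtain ⟨P, hP, hPQ⟩ := hQ.iteratedDeriv_inv_eq hne n
  have hpow : (fun ξ => (Q ξ ^ (n + 1))⁻¹) =O[⊤] fun ξ => (exp (a * bracket ξ) ^ (n + 1))⁻¹ :=
    (hlow.pow (n + 1)).inv_rev (Eventually.of_forall fun ξ h => absurd h (by positivity))
  rw [hPQ]
  refine ((hP.2 0 (n * a + (b + a)) (by linarith)).mul hpow).congr (fun ξ => div_eq_mul_inv _ _)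
    fun ξ => ?_
  rw [← exp_nat_mul, ← exp_neg, ← exp_add]
  push_cast
  ring_nf

lemma exists_schwartzMap (hf : ExpGrowth a f) (ha : a < 0) : ∃ K : 𝓢(ℝ, ℂ), ⇑K = f := by
  refine ⟨⟨f, hf.1, fun k n => ?_⟩, rfl⟩
  have hpoly : (fun x : ℝ => ‖x‖ ^ k) =O[⊤] fun x => exp (-(a / 2) * bracket x) :=
    (isBigO_of_le _ fun x => by
      rw [norm_pow, norm_pow, norm_norm, norm_of_nonneg (by positivity : (0 : ℝ) ≤ 1 + ‖x‖)]
      gcongr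
      linarith).trans (isBigO_one_add_norm_pow_exp_bracket k (by linarith))
  obtain ⟨C, hC⟩ := isBigO_top.1 <| (hpoly.mul (hf.2 n (a / 2) (by linarith)).norm_left).congr_right
    (g₂ := fun _ => (1 : ℝ)) fun x => by
      rw [← exp_add, ← add_mul, neg_add_cancel, zero_mul, exp_zero]
  refine ⟨C, fun x => ?_⟩
  simpa [norm_iteratedFDeriv_eq_norm_iteratedDeriv] using hC x

end ExpGrowth

lemma expGrowth_ofReal_bracket : ExpGrowth 0 fun ξ => (bracket ξ : ℂ) :=
  (Complex.hasTemperateGrowth_ofReal.comp hasTemperateGrowth_bracket).expGrowth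

lemma expGrowth_cexp_mul_bracket (c : ℝ) : ExpGrowth c fun ξ => Complex.exp (c * bracket ξ) := by
  set B : ℝ → ℂ := fun ξ => (bracket ξ : ℂ)
  have hBd : Differentiable ℝ B := expGrowth_ofReal_bracket.1.differentiable (by simp)
  refine .of_deriv_eq_mul (h := fun ξ => c * deriv B ξ) ?_ ?_
    (expGrowth_ofReal_bracket.deriv.const_mul c) fun b hb => isBigO_of_le _ fun ξ => ?_
  · exact Complex.contDiff_exp.comp (contDiff_const.mul expGrowth_ofReal_bracket.1)
  · ext ξ
    rw [((hBd ξ).hasDerivAt.const_mul (c : ℂ)).cexp.deriv]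
    simp only [Pi.mul_apply]
    ring
  · rw [← Complex.ofReal_mul, Complex.norm_exp_ofReal, norm_of_nonneg (exp_pos _).le]
    gcongr
    exact (bracket_pos ξ).le

lemma expGrowth_mul_cexp_add_mul_cexp_neg (c : ℝ) (u v : ℂ) :
    ExpGrowth |c| fun ξ =>
      u * Complex.exp (c * bracket ξ) + v * Complex.exp ((-c : ℝ) * bracket ξ) :=
  (((expGrowth_cexp_mul_bracket c).const_mul u).mono (le_abs_self c)).add
    (((expGrowth_cexp_mul_bracket (-c)).const_mul v).mono (neg_le_abs c))

lemma expGrowth_cosh_bracket_mul (c : ℝ) :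
    ExpGrowth |c| fun ξ => ((cosh (bracket ξ * c) : ℝ) : ℂ) := by
  convert expGrowth_mul_cexp_add_mul_cexp_neg c 2⁻¹ 2⁻¹ using 1
  ext ξ
  simp only [Complex.ofReal_cosh, Complex.cosh, Complex.ofReal_mul, Complex.ofReal_neg]
  ring_nf

lemma expGrowth_sinh_bracket_mul (c : ℝ) :
    ExpGrowth |c| fun ξ => ((sinh (bracket ξ * c) : ℝ) : ℂ) := by
  convert expGrowth_mul_cexp_add_mul_cexp_neg c 2⁻¹ (-2⁻¹) using 1
  ext ξ
  simp only [Complex.ofReal_sinh, Complex.sinh, Complex.ofReal_mul, Complex.ofReal_neg]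
  ring_nf

lemma mul_exp_le_sinh_of_le {L t : ℝ} (hLt : L ≤ t) :
    (1 - exp (-(2 * L))) / 2 * exp t ≤ sinh t := by
  rw [sinh_eq]
  have : exp (-t) ≤ exp (-(2 * L)) * exp t := by
    rw [← exp_add]; gcongr; linarith
  linarith

/-- The kernel's denominator, with the boundary symbol `p ξ = (D / μ) ξ² + i (c₀ / μ) ξ` left
abstract. -/
noncomputable def wentzellDenom (d L : ℝ) (p : ℝ → ℂ) (ξ : ℝ) : ℂ :=
  ((d * bracket ξ * sinh (bracket ξ * L) : ℝ) : ℂ) + p ξ * ((cosh (bracket ξ * L) : ℝ) : ℂ)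

lemma expGrowth_wentzellDenom (d : ℝ) {L : ℝ} (hL : 0 ≤ L) {p : ℝ → ℂ}
    (hp : p.HasTemperateGrowth) : ExpGrowth L (wentzellDenom d L p) := by
  have hsinh := (expGrowth_ofReal_bracket.const_mul d).mul (expGrowth_sinh_bracket_mul L)
  have hcosh := hp.expGrowth.mul (expGrowth_cosh_bracket_mul L)
  rw [abs_of_nonneg hL, zero_add] at hsinh hcosh
  convert hsinh.add hcosh using 1
  ext ξ
  simp [wentzellDenom, mul_assoc]

lemma isBigO_exp_wentzellDenom {d L : ℝ} (hd : 0 < d) (hL : 0 < L) {p : ℝ → ℂ}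
    (hp : ∀ ξ, 0 ≤ (p ξ).re) :
    (fun ξ => exp (L * bracket ξ)) =O[⊤] wentzellDenom d L p := by
  have hc : 0 < d * ((1 - exp (-(2 * L))) / 2) :=
    mul_pos hd (half_pos (sub_pos.2 (exp_lt_one_iff.2 (by linarith))))
  refine isBigO_top.2 ⟨(d * ((1 - exp (-(2 * L))) / 2))⁻¹, fun ξ => ?_⟩
  rw [norm_of_nonneg (exp_pos _).le, inv_mul_eq_div, le_div_iff₀ hc]
  have hβ := one_le_bracket ξ
  have hsinh := mul_exp_le_sinh_of_le (le_mul_of_one_le_left hL.le hβ)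
  have hsinh_pos : 0 < sinh (bracket ξ * L) := sinh_pos_iff.2 (by positivity)
  have hre : (wentzellDenom d L p ξ).re =
      d * bracket ξ * sinh (bracket ξ * L) + (p ξ).re * cosh (bracket ξ * L) := by
    simp only [wentzellDenom, Complex.add_re, Complex.mul_re, Complex.ofReal_re,
      Complex.ofReal_im, mul_zero, sub_zero]
  calc exp (L * bracket ξ) * (d * ((1 - exp (-(2 * L))) / 2))
      = d * ((1 - exp (-(2 * L))) / 2 * exp (bracket ξ * L)) := by ring_nf
    _ ≤ d * sinh (bracket ξ * L) := by gcongr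
    _ ≤ d * bracket ξ * sinh (bracket ξ * L) := by
        rw [mul_assoc]; gcongr; exact le_mul_of_one_le_left hsinh_pos.le hβ
    _ ≤ (wentzellDenom d L p ξ).re := by
        rw [hre]; have := mul_nonneg (hp ξ) (cosh_pos (bracket ξ * L)).le; linarith
    _ ≤ ‖wentzellDenom d L p ξ‖ := Complex.re_le_norm _

end Wentzell

open Wentzell in
theorem wentzell_kernel_schwartz_general (d D L μ c₀ : ℝ)
    (hd : 0 < d) (hD : 0 < D) (hL : 0 < L) (hμ : 0 < μ) :
    ∀ y : ℝ, -L ≤ y → y < 0 →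
      ∃ K : SchwartzMap ℝ ℂ, ∀ ξ : ℝ,
        K ξ = ((Real.cosh (Real.sqrt (ξ ^ 2 + 1) * (y + L)) : ℝ) : ℂ) /
          (((d * Real.sqrt (ξ ^ 2 + 1) * Real.sinh (Real.sqrt (ξ ^ 2 + 1) * L) : ℝ) : ℂ)
            + (((D / μ * ξ ^ 2 : ℝ) : ℂ) + ((c₀ / μ * ξ : ℝ) : ℂ) * Complex.I)
              * ((Real.cosh (Real.sqrt (ξ ^ 2 + 1) * L) : ℝ) : ℂ)) := by
  intro y hyL hy
  set p : ℝ → ℂ := fun ξ => ((D / μ * ξ ^ 2 : ℝ) : ℂ) + ((c₀ / μ * ξ : ℝ) : ℂ) * Complex.I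
  have hp : p.HasTemperateGrowth := by fun_prop
  have hp_re : ∀ ξ, 0 ≤ (p ξ).re := fun ξ => by
    simp only [p, Complex.add_re, Complex.ofReal_re, Complex.re_ofReal_mul, Complex.I_re, mul_zero,
      add_zero]
    positivity
  have hinv := (expGrowth_wentzellDenom d hL.le hp).inv (isBigO_exp_wentzellDenom hd hL hp_re)
  have hK := (expGrowth_cosh_bracket_mul (y + L)).mul hinv
  rw [abs_of_nonneg (by linarith), add_neg_cancel_right] at hK
  obtain ⟨K, hK⟩ := hK.exists_schwartzMap hy
  exact ⟨K, fun ξ => by rw [hK, Pi.mul_apply, div_eq_mul_inv]; rfl⟩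

theorem wentzell_kernel_schwartz (d D L μ c₀ : ℝ)
    (hd : 0 < d) (hD : 0 < D) (hL : 0 < L) (hμ : 0 < μ) (hc₀ : 0 < c₀) :
    ∀ y : ℝ, -L ≤ y → y < 0 →
      ∃ K : SchwartzMap ℝ ℂ, ∀ ξ : ℝ,
        K ξ = ((Real.cosh (Real.sqrt (ξ ^ 2 + 1) * (y + L)) : ℝ) : ℂ) /
          (((d * Real.sqrt (ξ ^ 2 + 1) * Real.sinh (Real.sqrt (ξ ^ 2 + 1) * L) : ℝ) : ℂ)
            + (((D / μ * ξ ^ 2 : ℝ) : ℂ) + ((c₀ / μ * ξ : ℝ) : ℂ) * Complex.I)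
              * ((Real.cosh (Real.sqrt (ξ ^ 2 + 1) * L) : ℝ) : ℂ)) :=
  wentzell_kernel_schwartz_general d D L μ c₀ hd hD hL hμ
end

section
/- Let d, D, μ, c₀, r, α_r > 0 with α_r = -Dr² + c₀r > 0, and let γ : ℝ → ℝ be continuous with γ ≥ γ₀ > 0. Suppose (φ, ψ) is a bounded C² solution on ℝ × [-L,0] of: -Dφ'' + (c₀-2Dr)φ' + (μ+α_r)φ - ψ(·,0) = g on ℝ; (-dΔ + (c₀-2dr)∂_x + γ(x))ψ = h in the strip; d∂_yψ(x,0) = μφ(x) - ψ(x,0); ∂_yψ(x,-L) = 0; with g, h bounded and (φ,ψ) → 0 at x = ±∞ in appropriate sense. Then ‖ψ‖_∞ ≤ (1/γ₀)‖h‖_∞ + (μ/α_r)‖g‖_∞ and ‖φ‖_∞ ≤ (1/(γ₀(μ+α_r)))‖h‖_∞ + (1/α_r)‖g‖_∞. -/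
/-!
Both estimates come from the maximum principle. Where `φ` has a positive maximum, `φ' = 0` and
`φ'' ≤ 0`, so the road equation gives `(μ + α) φ ≤ g + ψ(·, 0)`. Where `ψ` has a positive maximum
on the strip, either it lies on the road `y = 0`, where `∂_y ψ ≥ 0` and the Robin condition gives
`ψ ≤ μ φ`, or below it, where the Neumann condition (at `y = -L`) or interiority makes `∂_y ψ = 0`,
both second derivatives are `≤ 0` and the field equation gives `γ₀ ψ ≤ h`. Solving this pair of
inequalities yields the upper bounds, and linearity (`(φ, ψ) ↦ (-φ, -ψ)`) the lower ones. The
decay at `x = ±∞` is what makes the maxima attained.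
-/

open Set Filter Topology Function

section OneVariable

variable {f : ℝ → ℝ} {a b : ℝ}

lemma deriv_nonneg_of_isMaxOn_Icc_right (hab : a < b) (hf : DifferentiableAt ℝ f b)
    (hmax : IsMaxOn f (Icc a b) b) : 0 ≤ deriv f b := by
  have hcone : a - b ∈ posTangentConeAt (Icc a b) b :=
    sub_mem_posTangentConeAt_of_segment_subset (by rw [segment_eq_Icc' b a]; simp [hab.le])
  have h := hmax.localize.hasFDerivWithinAt_nonpos
    hf.hasDerivAt.hasFDerivAt.hasFDerivWithinAt hcone
  rw [ContinuousLinearMap.toSpanSingleton_apply, smul_eq_mul] at h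
  exact nonneg_of_mul_nonpos_right h (sub_neg.2 hab)

lemma deriv_deriv_nonpos_of_isMaxOn_Icc_left (hab : a < b) (hf : ContinuousOn f (Icc a b))
    (hmax : IsMaxOn f (Icc a b) a) (hd : deriv f a = 0) : deriv (deriv f) a ≤ 0 := by
  by_contra! hpos
  have hincr : ∀ᶠ x in 𝓝[>] a, 0 < deriv f x :=
    deriv_pos_right_of_sign_deriv
      (nhdsWithin_le_nhds (eventually_nhdsWithin_sign_eq_of_deriv_pos hpos hd))
  obtain ⟨c, hac, hc⟩ := (nhdsGT_basis a).eventually_iff.1 hincr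
  have hab' : a < min b c := lt_min hab hac
  have hmono : StrictMonoOn f (Icc a (min b c)) := by
    refine strictMonoOn_of_deriv_pos (convex_Icc _ _)
      (hf.mono (Icc_subset_Icc_right (min_le_left _ _))) fun x hx => hc ?_
    rw [interior_Icc] at hx
    exact ⟨hx.1, hx.2.trans_le (min_le_right _ _)⟩
  exact (hmono (left_mem_Icc.2 hab'.le) (right_mem_Icc.2 hab'.le) hab').not_ge
    (hmax ⟨hab'.le, min_le_left _ _⟩)

lemma deriv_deriv_nonpos_of_isMaxOn_univ (hf : Continuous f) (hmax : IsMaxOn f univ a) :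
    deriv (deriv f) a ≤ 0 :=
  deriv_deriv_nonpos_of_isMaxOn_Icc_left (lt_add_one a) hf.continuousOn
    (hmax.on_subset (subset_univ _)) (hmax.isLocalMax univ_mem).deriv_eq_zero

end OneVariable

lemma ContinuousOn.exists_isMaxOn_of_tendsto {X : Type*} [TopologicalSpace X] {s : Set X}
    {f : X → ℝ} {c : ℝ} (hf : ContinuousOn f s) (hs : IsClosed s)
    (hlim : Tendsto f (cocompact X ⊓ 𝓟 s) (𝓝 c)) {p : X} (hp : p ∈ s) (hc : c < f p) :
    ∃ q ∈ s, IsMaxOn f s q :=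
  hf.exists_isMaxOn' hs hp (hlim.eventually (eventually_le_nhds hc))

lemma tendsto_cocompact_inf_principal_univ_prod {K : Set ℝ} (hK : IsCompact K)
    {F : ℝ × ℝ → ℝ}
    (hF : ∀ ε > 0, ∃ X : ℝ, ∀ x : ℝ, X ≤ |x| → ∀ y ∈ K, |F (x, y)| < ε) :
    Tendsto F (cocompact (ℝ × ℝ) ⊓ 𝓟 (univ ×ˢ K)) (𝓝 0) := by
  refine Metric.tendsto_nhds.2 fun ε hε => ?_
  obtain ⟨X, hX⟩ := hF ε hε
  refine eventually_inf_principal.2 <|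
    mem_cocompact.2 ⟨Metric.closedBall 0 X ×ˢ K, (isCompact_closedBall 0 X).prod hK, ?_⟩
  rintro ⟨x, y⟩ hxy ⟨-, hy⟩
  have hx : X < |x| := by
    simpa [Real.dist_eq, hy] using hxy
  simpa [Real.dist_eq] using hX x hx.le y hy

section Slices

variable {F : ℝ × ℝ → ℝ}

lemma deriv_comp_prodMk_left_eq_fderiv (hF : Differentiable ℝ F) (x y : ℝ) :
    deriv (fun x' => F (x', y)) x = fderiv ℝ F (x, y) (1, 0) :=
  ((hF (x, y)).hasFDerivAt.comp_hasDerivAt x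
    ((hasDerivAt_id x).prodMk (hasDerivAt_const x y))).deriv

lemma continuous_deriv_comp_prodMk_left (hF : ContDiff ℝ 1 F) :
    Continuous fun p : ℝ × ℝ => deriv (fun x' => F (x', p.2)) p.1 := by
  simp_rw [deriv_comp_prodMk_left_eq_fderiv (hF.differentiable one_ne_zero)]
  exact (hF.continuous_fderiv one_ne_zero).clm_apply continuous_const

lemma continuous_deriv_deriv_comp_prodMk_left (hF : ContDiff ℝ 2 F) :
    Continuous fun p : ℝ × ℝ => deriv (deriv fun x' => F (x', p.2)) p.1 := by
  have hslice : ∀ y, deriv (fun x' => F (x', y)) = fun x' => fderiv ℝ F (x', y) (1, 0) :=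
    fun y => funext fun x' =>
      deriv_comp_prodMk_left_eq_fderiv (hF.differentiable two_ne_zero) x' y
  simp_rw [hslice]
  exact continuous_deriv_comp_prodMk_left
    ((hF.fderiv_right le_rfl).clm_apply contDiff_const)

end Slices

/-- `α` plays the role of the paper's `α_r = -D r² + c₀ r`. -/
structure RoadFieldSolution (d D μ c₀ r L α : ℝ) (γ φ : ℝ → ℝ) (ψ : ℝ → ℝ → ℝ) (g h : ℝ → ℝ) :
    Prop where
  contDiff_road : ContDiff ℝ 2 φ
  contDiff_field : ContDiff ℝ 2 (uncurry ψ)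
  road_eq : ∀ x, -D * deriv (deriv φ) x + (c₀ - 2 * D * r) * deriv φ x + (μ + α) * φ x - ψ x 0
    = g x
  field_eq : ∀ x, ∀ y ∈ Ioo (-L) 0,
    -d * (deriv (deriv fun x' => ψ x' y) x + deriv (deriv (ψ x)) y)
      + (c₀ - 2 * d * r) * deriv (fun x' => ψ x' y) x + γ x * ψ x y = h x
  robin : ∀ x, d * deriv (ψ x) 0 = μ * φ x - ψ x 0
  neumann : ∀ x, deriv (ψ x) (-L) = 0
  tendsto_road : Tendsto φ (cocompact ℝ) (𝓝 0)
  tendsto_field : Tendsto (uncurry ψ) (cocompact (ℝ × ℝ) ⊓ 𝓟 (univ ×ˢ Icc (-L) 0)) (𝓝 0)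

namespace RoadFieldSolution

variable {d D μ c₀ r L α : ℝ} {γ φ g h : ℝ → ℝ} {ψ : ℝ → ℝ → ℝ}

lemma neg (hs : RoadFieldSolution d D μ c₀ r L α γ φ ψ g h) :
    RoadFieldSolution d D μ c₀ r L α γ (-φ) (-ψ) (-g) (-h) where
  contDiff_road := hs.contDiff_road.neg
  contDiff_field := hs.contDiff_field.neg
  road_eq x := by
    simp only [Pi.neg_apply, deriv.neg', deriv.fun_neg']
    linarith [hs.road_eq x]
  field_eq x y hy := by
    simp only [Pi.neg_apply, deriv.fun_neg', deriv.neg']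
    linarith [hs.field_eq x y hy]
  robin x := by
    simp only [Pi.neg_apply, deriv.neg']
    linarith [hs.robin x]
  neumann x := by simp [hs.neumann x]
  tendsto_road := by
    have h : Tendsto (-φ) _ (𝓝 (-0)) := hs.tendsto_road.neg
    rwa [neg_zero] at h
  tendsto_field := by
    have h : Tendsto (uncurry (-ψ)) _ (𝓝 (-0)) := hs.tendsto_field.neg
    rwa [neg_zero] at h

lemma contDiff_field_left (hs : RoadFieldSolution d D μ c₀ r L α γ φ ψ g h) (y : ℝ) :
    ContDiff ℝ 2 fun x => ψ x y :=
  hs.contDiff_field.comp (contDiff_prodMk_left y)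

lemma contDiff_field_right (hs : RoadFieldSolution d D μ c₀ r L α γ φ ψ g h) (x : ℝ) :
    ContDiff ℝ 2 (ψ x) :=
  hs.contDiff_field.comp (contDiff_prodMk_right x)

lemma field_eq_of_mem_Icc (hs : RoadFieldSolution d D μ c₀ r L α γ φ ψ g h) (hL : 0 < L)
    (x : ℝ) : ∀ y ∈ Icc (-L) 0,
      -d * (deriv (deriv fun x' => ψ x' y) x + deriv (deriv (ψ x)) y)
        + (c₀ - 2 * d * r) * deriv (fun x' => ψ x' y) x + γ x * ψ x y = h x := by
  have hcont : Continuous fun y =>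
      -d * (deriv (deriv fun x' => ψ x' y) x + deriv (deriv (ψ x)) y)
        + (c₀ - 2 * d * r) * deriv (fun x' => ψ x' y) x + γ x * ψ x y := by
    have hxx := (continuous_deriv_deriv_comp_prodMk_left hs.contDiff_field).comp (.prodMk_right x)
    have hx := (continuous_deriv_comp_prodMk_left (hs.contDiff_field.of_le one_le_two)).comp
      (.prodMk_right x)
    have hyy := (hs.contDiff_field_right x).continuous_iteratedDeriv 2 le_rfl
    simp only [iteratedDeriv_succ, iteratedDeriv_zero] at hyy
    exact ((continuous_const.mul (hxx.add hyy)).add (continuous_const.mul hx)).add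
      (continuous_const.mul (hs.contDiff_field_right x).continuous)
  refine EqOn.of_subset_closure (fun y hy => hs.field_eq x y hy) hcont.continuousOn
    continuousOn_const Ioo_subset_Icc_self (closure_Ioo (by linarith)).ge

lemma mul_road_le (hs : RoadFieldSolution d D μ c₀ r L α γ φ ψ g h)
    (hD : 0 ≤ D) (hμα : 0 < μ + α) {Mg Ψ : ℝ} (hg : ∀ x, g x ≤ Mg)
    (hψ : ∀ x, ψ x 0 ≤ Ψ) (hΨ : 0 ≤ Mg + Ψ) (x : ℝ) : (μ + α) * φ x ≤ Mg + Ψ := by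
  rcases le_or_gt (φ x) 0 with hx | hx
  · exact (mul_nonpos_of_nonneg_of_nonpos hμα.le hx).trans hΨ
  have hcont := hs.contDiff_road.continuous
  obtain ⟨x₁, -, hmax⟩ := hcont.continuousOn.exists_isMaxOn_of_tendsto isClosed_univ
    (by rw [principal_univ, inf_top_eq]; exact hs.tendsto_road) (mem_univ x) hx
  have hd₁ : deriv φ x₁ = 0 := (hmax.isLocalMax univ_mem).deriv_eq_zero
  have hd₂ : D * deriv (deriv φ) x₁ ≤ 0 :=
    mul_nonpos_of_nonneg_of_nonpos hD (deriv_deriv_nonpos_of_isMaxOn_univ hcont hmax)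
  have hroad := hs.road_eq x₁
  rw [hd₁] at hroad
  calc (μ + α) * φ x ≤ (μ + α) * φ x₁ := by gcongr; exact hmax (mem_univ x)
    _ ≤ Mg + Ψ := by linarith [hg x₁, hψ x₁]

lemma field_le_of_isMaxOn_zero (hs : RoadFieldSolution d D μ c₀ r L α γ φ ψ g h) (hd : 0 ≤ d)
    (hL : 0 < L) {x₀ : ℝ} (hmax : IsMaxOn (ψ x₀) (Icc (-L) 0) 0) : ψ x₀ 0 ≤ μ * φ x₀ := by
  have hderiv : 0 ≤ deriv (ψ x₀) 0 := deriv_nonneg_of_isMaxOn_Icc_right (by linarith)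
    ((hs.contDiff_field_right x₀).differentiable two_ne_zero 0) hmax
  linarith [hs.robin x₀, mul_nonneg hd hderiv]

lemma mul_field_le_of_isMaxOn (hs : RoadFieldSolution d D μ c₀ r L α γ φ ψ g h) (hd : 0 ≤ d)
    (hL : 0 < L) {γ₀ Mh : ℝ} (hγ : ∀ x, γ₀ ≤ γ x) (hh : ∀ x, h x ≤ Mh) {x₀ y₀ : ℝ}
    (hy₀ : y₀ ∈ Ico (-L) 0) (hxmax : IsMaxOn (fun x => ψ x y₀) univ x₀)
    (hymax : IsMaxOn (ψ x₀) (Icc (-L) 0) y₀) (hpos : 0 < ψ x₀ y₀) :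
    γ₀ * ψ x₀ y₀ ≤ Mh := by
  have hx₁ : deriv (fun x => ψ x y₀) x₀ = 0 := (hxmax.isLocalMax univ_mem).deriv_eq_zero
  have hx₂ := deriv_deriv_nonpos_of_isMaxOn_univ (hs.contDiff_field_left y₀).continuous hxmax
  have hy₁ : deriv (ψ x₀) y₀ = 0 := by
    rcases hy₀.1.eq_or_lt with rfl | hlt
    · exact hs.neumann x₀
    · exact (hymax.isLocalMax (Icc_mem_nhds hlt hy₀.2)).deriv_eq_zero
  have hy₂ := deriv_deriv_nonpos_of_isMaxOn_Icc_left hy₀.2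
    (hs.contDiff_field_right x₀).continuous.continuousOn
    (hymax.on_subset (Icc_subset_Icc_left hy₀.1)) hy₁
  have hfield := hs.field_eq_of_mem_Icc hL x₀ y₀ (Ico_subset_Icc_self hy₀)
  rw [hx₁] at hfield
  calc γ₀ * ψ x₀ y₀ ≤ γ x₀ * ψ x₀ y₀ := by gcongr; exact hγ x₀
    _ ≤ Mh := by linarith [hh x₀, mul_nonneg hd (neg_nonneg.2 (add_nonpos hx₂ hy₂))]

lemma exists_field_bound (hs : RoadFieldSolution d D μ c₀ r L α γ φ ψ g h) (hd : 0 ≤ d)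
    (hD : 0 ≤ D) (hμ : 0 ≤ μ) (hL : 0 < L) {γ₀ Mg Mh : ℝ} (hγ₀ : 0 < γ₀) (hα : 0 < α)
    (hγ : ∀ x, γ₀ ≤ γ x) (hg : ∀ x, g x ≤ Mg) (hh : ∀ x, h x ≤ Mh) (hMg : 0 ≤ Mg)
    (hMh : 0 ≤ Mh) :
    ∃ Ψ, 0 ≤ Ψ ∧ Ψ ≤ 1 / γ₀ * Mh + μ / α * Mg ∧ ∀ x, ∀ y ∈ Icc (-L) 0, ψ x y ≤ Ψ := by
  by_cases hpos : ∃ x, ∃ y ∈ Icc (-L) 0, 0 < ψ x y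
  swap
  · push Not at hpos
    exact ⟨0, le_rfl, by positivity, hpos⟩
  obtain ⟨x, y, hy, hxy⟩ := hpos
  obtain ⟨⟨x₀, y₀⟩, ⟨-, hy₀⟩, hmax⟩ :=
    hs.contDiff_field.continuous.continuousOn.exists_isMaxOn_of_tendsto
      (isClosed_univ.prod isClosed_Icc) hs.tendsto_field (mk_mem_prod (mem_univ x) hy) hxy
  have hle : ∀ x, ∀ y ∈ Icc (-L) 0, ψ x y ≤ ψ x₀ y₀ :=
    fun x y hy => hmax (mk_mem_prod (mem_univ x) hy)
  have hpos₀ : 0 < ψ x₀ y₀ := hxy.trans_le (hle x y hy)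
  refine ⟨ψ x₀ y₀, hpos₀.le, ?_, hle⟩
  rcases hy₀.2.eq_or_lt with rfl | hlt
  · have hroad := hs.mul_road_le hD (by positivity) hg
      (fun x => hle x 0 (right_mem_Icc.2 (by linarith))) (by positivity) x₀
    have hrobin := hs.field_le_of_isMaxOn_zero hd hL fun y hy => hle x₀ y hy
    have hαψ : α * ψ x₀ 0 ≤ μ * Mg := by nlinarith [mul_le_mul_of_nonneg_left hroad hμ]
    calc ψ x₀ 0 ≤ μ / α * Mg := by rw [div_mul_eq_mul_div, le_div_iff₀ hα]; linarith
      _ ≤ 1 / γ₀ * Mh + μ / α * Mg := le_add_of_nonneg_left (by positivity)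
  · have hfield := hs.mul_field_le_of_isMaxOn hd hL hγ hh ⟨hy₀.1, hlt⟩
      (fun x _ => hle x y₀ hy₀) (fun y hy => hle x₀ y hy) hpos₀
    calc ψ x₀ y₀ ≤ 1 / γ₀ * Mh := by rw [one_div_mul_eq_div, le_div_iff₀ hγ₀]; linarith
      _ ≤ 1 / γ₀ * Mh + μ / α * Mg := le_add_of_nonneg_right (by positivity)

lemma field_le_and_road_le (hs : RoadFieldSolution d D μ c₀ r L α γ φ ψ g h) (hd : 0 ≤ d)
    (hD : 0 ≤ D) (hμ : 0 ≤ μ) (hL : 0 < L) {γ₀ Mg Mh : ℝ} (hγ₀ : 0 < γ₀) (hα : 0 < α)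
    (hγ : ∀ x, γ₀ ≤ γ x) (hg : ∀ x, g x ≤ Mg) (hh : ∀ x, h x ≤ Mh) (hMg : 0 ≤ Mg)
    (hMh : 0 ≤ Mh) :
    (∀ x, ∀ y ∈ Icc (-L) 0, ψ x y ≤ 1 / γ₀ * Mh + μ / α * Mg) ∧
      ∀ x, φ x ≤ 1 / (γ₀ * (μ + α)) * Mh + 1 / α * Mg := by
  obtain ⟨Ψ, hΨ, hΨle, hψle⟩ := hs.exists_field_bound hd hD hμ hL hγ₀ hα hγ hg hh hMg hMh
  refine ⟨fun x y hy => (hψle x y hy).trans hΨle, fun x => ?_⟩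
  have hμα : 0 < μ + α := by positivity
  have hroad := hs.mul_road_le hD hμα hg (fun x => hψle x 0 (right_mem_Icc.2 (by linarith)))
    (by positivity) x
  have hsum : (μ + α) * (1 / (γ₀ * (μ + α)) * Mh + 1 / α * Mg)
      = Mg + (1 / γ₀ * Mh + μ / α * Mg) := by
    field_simp
    ring
  exact le_of_mul_le_mul_left (by linarith) hμα

end RoadFieldSolution

theorem conjugated_system_apriori_estimate_general (d D μ c₀ r L γ₀ : ℝ)
    (hd : 0 < d) (hD : 0 < D) (hμ : 0 < μ) (hL : 0 < L)
    (hγ₀ : 0 < γ₀)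
    (hαr : 0 < -D * r ^ 2 + c₀ * r)
    (γ : ℝ → ℝ) (hγ : ∀ x, γ₀ ≤ γ x)
    (φ : ℝ → ℝ) (ψ : ℝ → ℝ → ℝ) (g h : ℝ → ℝ) (Mg Mh : ℝ)
    (hφC2 : ContDiff ℝ 2 φ) (hψC2 : ContDiff ℝ 2 (fun p : ℝ × ℝ => ψ p.1 p.2))
    (hgb : ∀ x, |g x| ≤ Mg) (hhb : ∀ x, |h x| ≤ Mh)
    (hroad : ∀ x : ℝ, -D * deriv (deriv φ) x + (c₀ - 2 * D * r) * deriv φ x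
      + (μ + (-D * r ^ 2 + c₀ * r)) * φ x - ψ x 0 = g x)
    (hpde : ∀ x : ℝ, ∀ y ∈ Set.Ioo (-L) (0 : ℝ),
      -d * (deriv (deriv (fun x' => ψ x' y)) x + deriv (deriv (fun y' => ψ x y')) y)
        + (c₀ - 2 * d * r) * deriv (fun x' => ψ x' y) x + γ x * ψ x y = h x)
    (hRobin : ∀ x : ℝ, d * deriv (fun y' => ψ x y') 0 = μ * φ x - ψ x 0)
    (hNeu : ∀ x : ℝ, deriv (fun y' => ψ x y') (-L) = 0)
    (hφlim : Filter.Tendsto φ Filter.atBot (nhds 0) ∧ Filter.Tendsto φ Filter.atTop (nhds 0))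
    (hψlim : ∀ ε > 0, ∃ X : ℝ, ∀ x : ℝ, X ≤ |x| → ∀ y ∈ Set.Icc (-L) 0, |ψ x y| < ε) :
    (∀ x : ℝ, ∀ y ∈ Set.Icc (-L) (0 : ℝ),
      |ψ x y| ≤ (1 / γ₀) * Mh + (μ / (-D * r ^ 2 + c₀ * r)) * Mg) ∧
    (∀ x : ℝ, |φ x| ≤ (1 / (γ₀ * (μ + (-D * r ^ 2 + c₀ * r)))) * Mh
      + (1 / (-D * r ^ 2 + c₀ * r)) * Mg) := by
  have hs : RoadFieldSolution d D μ c₀ r L (-D * r ^ 2 + c₀ * r) γ φ ψ g h :=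
    { contDiff_road := hφC2
      contDiff_field := hψC2
      road_eq := hroad
      field_eq := hpde
      robin := hRobin
      neumann := hNeu
      tendsto_road := by rw [cocompact_eq_atBot_atTop]; exact hφlim.1.sup hφlim.2
      tendsto_field := tendsto_cocompact_inf_principal_univ_prod isCompact_Icc hψlim }
  have hMg : 0 ≤ Mg := (abs_nonneg _).trans (hgb 0)
  have hMh : 0 ≤ Mh := (abs_nonneg _).trans (hhb 0)
  obtain ⟨hψ_le, hφ_le⟩ := hs.field_le_and_road_le hd.le hD.le hμ.le hL hγ₀ hαr hγ
    (fun x => (le_abs_self _).trans (hgb x)) (fun x => (le_abs_self _).trans (hhb x)) hMg hMh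
  obtain ⟨hψ_ge, hφ_ge⟩ := hs.neg.field_le_and_road_le hd.le hD.le hμ.le hL hγ₀ hαr hγ
    (fun x => (neg_le_abs _).trans (hgb x)) (fun x => (neg_le_abs _).trans (hhb x)) hMg hMh
  exact ⟨fun x y hy => abs_le.2 ⟨neg_le.1 (hψ_ge x y hy), hψ_le x y hy⟩,
    fun x => abs_le.2 ⟨neg_le.1 (hφ_ge x), hφ_le x⟩⟩

theorem conjugated_system_apriori_estimate (d D μ c₀ r L γ₀ : ℝ)
    (hd : 0 < d) (hD : 0 < D) (hμ : 0 < μ) (hc₀ : 0 < c₀) (hr : 0 < r) (hL : 0 < L)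
    (hγ₀ : 0 < γ₀)
    (hαr : 0 < -D * r ^ 2 + c₀ * r)
    (γ : ℝ → ℝ) (hγc : Continuous γ) (hγ : ∀ x, γ₀ ≤ γ x)
    (φ : ℝ → ℝ) (ψ : ℝ → ℝ → ℝ) (g h : ℝ → ℝ) (Mg Mh : ℝ)
    (hφC2 : ContDiff ℝ 2 φ) (hψC2 : ContDiff ℝ 2 (fun p : ℝ × ℝ => ψ p.1 p.2))
    (hφb : ∃ M : ℝ, ∀ x, |φ x| ≤ M) (hψb : ∃ M : ℝ, ∀ x y, |ψ x y| ≤ M)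
    (hgb : ∀ x, |g x| ≤ Mg) (hhb : ∀ x, |h x| ≤ Mh)
    (hroad : ∀ x : ℝ, -D * deriv (deriv φ) x + (c₀ - 2 * D * r) * deriv φ x
      + (μ + (-D * r ^ 2 + c₀ * r)) * φ x - ψ x 0 = g x)
    (hpde : ∀ x : ℝ, ∀ y ∈ Set.Ioo (-L) (0 : ℝ),
      -d * (deriv (deriv (fun x' => ψ x' y)) x + deriv (deriv (fun y' => ψ x y')) y)
        + (c₀ - 2 * d * r) * deriv (fun x' => ψ x' y) x + γ x * ψ x y = h x)
    (hRobin : ∀ x : ℝ, d * deriv (fun y' => ψ x y') 0 = μ * φ x - ψ x 0)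
    (hNeu : ∀ x : ℝ, deriv (fun y' => ψ x y') (-L) = 0)
    (hφlim : Filter.Tendsto φ Filter.atBot (nhds 0) ∧ Filter.Tendsto φ Filter.atTop (nhds 0))
    (hψlim : ∀ ε > 0, ∃ X : ℝ, ∀ x : ℝ, X ≤ |x| → ∀ y ∈ Set.Icc (-L) 0, |ψ x y| < ε) :
    (∀ x : ℝ, ∀ y ∈ Set.Icc (-L) (0 : ℝ),
      |ψ x y| ≤ (1 / γ₀) * Mh + (μ / (-D * r ^ 2 + c₀ * r)) * Mg) ∧
    (∀ x : ℝ, |φ x| ≤ (1 / (γ₀ * (μ + (-D * r ^ 2 + c₀ * r)))) * Mh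
      + (1 / (-D * r ^ 2 + c₀ * r)) * Mg) :=
  conjugated_system_apriori_estimate_general d D μ c₀ r L γ₀ hd hD hμ hL hγ₀ hαr γ hγ φ ψ g h Mg Mh
    hφC2 hψC2 hgb hhb hroad hpde hRobin hNeu hφlim hψlim
end
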